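/- For all spanoids S₁ on a finite set X₁ and S₂ on a finite set X₂: LP^entropy(S₁ ⋉ S₂) ≤ LP^entropy(S₁) · LP^entropy(S₂), where ⋉ denotes the semi-direct product of spanoids. -/

import Mathlib

/-!
A feasible `f` for `S₁ ⋉ S₂` restricts on each row `{i} × X₂` to a feasible function for `S₂`,
so every row has value at most `LP(S₂)`. The function `A ↦ f (A × X₂)` satisfies all constraints
of the entropy LP of `S₁` except that its singleton values are bounded by `LP(S₂)` instead of `1`;
dividing by `LP(S₂)` makes it feasible for `S₁`, whence `f (X₁ × X₂) ≤ LP(S₁) · LP(S₂)`.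
-/

open scoped BigOperators

/-- A spanoid on ground set `X`: a set of inference rules `(A, i)`,
read as "`A` spans `i`". -/
abbrev SpanoidOn (X : Type) : Type := Set (Set X × X)

/-- The span of `T`: the smallest superset `T'` of `T` such that whenever `(A, i)` is a
rule with `A ⊆ T'`, also `i ∈ T'`. -/
def sSpan {X : Type} (S : SpanoidOn X) (T : Set X) : Set X :=
  ⋂₀ {T' : Set X | T ⊆ T' ∧ ∀ p ∈ S, p.1 ⊆ T' → p.2 ∈ T'}

/-- The rank of a spanoid: the minimum size of a subset spanning the whole ground set. -/
noncomputable def sRank {X : Type} [Fintype X] (S : SpanoidOn X) : ℕ :=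
  sInf {k : ℕ | ∃ T : Set X, T.ncard = k ∧ sSpan S T = Set.univ}

/-- A set is closed if it equals its own span. -/
def sClosed {X : Type} (S : SpanoidOn X) (B : Set X) : Prop := sSpan S B = B

/-- A set is open if its complement is closed. -/
def sOpen {X : Type} (S : SpanoidOn X) (B : Set X) : Prop := sClosed S Bᶜ

/-- A code `C ⊆ K^X` is consistent with the spanoid `S` if for every rule `(A, i)` of `S`
there is a function `g` with `c i = g (c|_A)` for all codewords `c ∈ C`. -/
def sConsistent {X K : Type} (S : SpanoidOn X) (C : Set (X → K)) : Prop :=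
  ∀ p ∈ S, ∃ g : (↥p.1 → K) → K, ∀ c ∈ C, c p.2 = g (fun a => c a.1)

/-- The functional rank of a spanoid: the supremum of `log |C| / log |Σ|` over all finite
alphabets `Σ` (of size at least 2) and all codes `C ⊆ Σ^X` consistent with `S`. -/
noncomputable def sFrank {X : Type} (S : SpanoidOn X) : ℝ :=
  sSup {d : ℝ | ∃ m : ℕ, 2 ≤ m ∧ ∃ C : Set (X → Fin m),
    sConsistent S C ∧ d = Real.log (Nat.card C) / Real.log m}

/-- Feasibility for the entropy linear program of a spanoid. -/
def sEntFeasible {X : Type} (S : SpanoidOn X) (f : Set X → ℝ) : Prop :=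
  f ∅ = 0 ∧ (∀ i : X, f {i} ≤ 1) ∧
  (∀ A B : Set X, f (A ∪ B) + f (A ∩ B) ≤ f A + f B) ∧
  (∀ A B : Set X, A ⊆ B → f A ≤ f B) ∧
  (∀ A : Set X, ∀ i ∈ sSpan S A, f (A ∪ {i}) = f A)

/-- The optimum of the entropy linear program: maximize `f(X)` over feasible `f`. -/
noncomputable def sLPentropy {X : Type} (S : SpanoidOn X) : ℝ :=
  sSup {y : ℝ | ∃ f : Set X → ℝ, sEntFeasible S f ∧ y = f Set.univ}

/-- The optimum of the covering linear program: minimize `∑ i, x i` over `x ≥ 0` such that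
`∑_{i ∈ B} x i ≥ 1` for every nonempty open set `B`. -/
noncomputable def sLPcover {X : Type} [Fintype X] (S : SpanoidOn X) : ℝ :=
  sInf {y : ℝ | ∃ x : X → ℝ, (∀ i, 0 ≤ x i) ∧
    (∀ B : Set X, B.Nonempty → sOpen S B → 1 ≤ ∑ i, B.indicator x i) ∧
    y = ∑ i, x i}

/-- A spanoid on `[n]` is a `q`-LCS with error-tolerance `δ` if every `i` is spanned by at
least `δ n` pairwise disjoint `q`-element subsets. -/
def sIsLCS {n : ℕ} (q : ℕ) (δ : ℝ) (S : SpanoidOn (Fin n)) : Prop :=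
  ∀ i : Fin n, ∃ M : Finset (Finset (Fin n)),
    δ * n ≤ (M.card : ℝ) ∧
    (∀ A ∈ M, A.card = q) ∧
    ((M : Set (Finset (Fin n))).Pairwise fun A B => Disjoint A B) ∧
    ∀ A ∈ M, ((A : Set (Fin n)), i) ∈ S

/-- The semi-direct product `S₁ ⋉ S₂` on `X₁ × X₂`: whenever `A ⊨ i` in `S₁` and `j ∈ X₂`,
the rule `(A × X₂, (i,j))`; and whenever `B ⊨ j` in `S₂` and `i ∈ X₁`, the rule
`({i} × B, (i,j))`. -/
def semidirect {X₁ X₂ : Type} (S₁ : SpanoidOn X₁) (S₂ : SpanoidOn X₂) :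
    SpanoidOn (X₁ × X₂) :=
  {p | (∃ (A : Set X₁) (i : X₁) (j : X₂), i ∈ sSpan S₁ A ∧
          p = (A ×ˢ (Set.univ : Set X₂), (i, j))) ∨
       (∃ (B : Set X₂) (i : X₁) (j : X₂), j ∈ sSpan S₂ B ∧
          p = (({i} : Set X₁) ×ˢ B, (i, j)))}

open Set

section Span

variable {X : Type} (S : SpanoidOn X)

lemma subset_sSpan (T : Set X) : T ⊆ sSpan S T :=
  subset_sInter fun _ hT' => hT'.1

lemma sSpan_mono {T U : Set X} (h : T ⊆ U) : sSpan S T ⊆ sSpan S U :=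
  fun _ hx T' hT' => hx T' ⟨h.trans hT'.1, hT'.2⟩

variable {S}

lemma mem_sSpan_of_mem {T : Set X} {p : Set X × X} (hp : p ∈ S) (hsub : p.1 ⊆ sSpan S T) :
    p.2 ∈ sSpan S T :=
  fun _ hT' => hT'.2 p hp (hsub.trans (sInter_subset_of_mem hT'))

end Span

/-- The constraints of the entropy LP of `S` other than the normalization `f {i} ≤ 1`. -/
structure IsSpanPolymatroid {X : Type} (S : SpanoidOn X) (f : Set X → ℝ) : Prop where
  map_empty : f ∅ = 0
  submodular : ∀ A B : Set X, f (A ∪ B) + f (A ∩ B) ≤ f A + f B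
  mono : ∀ A B : Set X, A ⊆ B → f A ≤ f B
  union_singleton_of_mem_sSpan : ∀ A : Set X, ∀ i ∈ sSpan S A, f (A ∪ {i}) = f A

lemma sEntFeasible_iff {X : Type} {S : SpanoidOn X} {f : Set X → ℝ} :
    sEntFeasible S f ↔ IsSpanPolymatroid S f ∧ ∀ i, f {i} ≤ 1 :=
  ⟨fun ⟨h0, h1, hsub, hmono, hspan⟩ => ⟨⟨h0, hsub, hmono, hspan⟩, h1⟩,
    fun ⟨⟨h0, hsub, hmono, hspan⟩, h1⟩ => ⟨h0, h1, hsub, hmono, hspan⟩⟩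

namespace IsSpanPolymatroid

variable {X : Type} {S : SpanoidOn X} {f : Set X → ℝ}

lemma union_eq_of_subset_sSpan (hf : IsSpanPolymatroid S f) (T : Set X) {D : Set X}
    (hD : D.Finite) (hDT : D ⊆ sSpan S T) : f (T ∪ D) = f T := by
  induction D, hD using Set.Finite.induction_on with
  | empty => rw [union_empty]
  | @insert x D _ _ ih =>
    have hx : x ∈ sSpan S (T ∪ D) :=
      sSpan_mono S subset_union_left (hDT (mem_insert x D))
    rw [union_insert, ← union_singleton, hf.union_singleton_of_mem_sSpan _ x hx,
      ih ((subset_insert x D).trans hDT)]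

lemma apply_le_ncard_mul (hf : IsSpanPolymatroid S f) {c : ℝ} (hc : ∀ i, f {i} ≤ c)
    {A : Set X} (hA : A.Finite) : f A ≤ A.ncard * c := by
  induction A, hA using Set.Finite.induction_on with
  | empty => simp [hf.map_empty]
  | @insert x D hxD hD ih =>
    have hdisj : D ∩ {x} = ∅ := inter_singleton_eq_empty.2 hxD
    have := hf.submodular D {x}
    rw [hdisj, hf.map_empty, union_singleton] at this
    rw [ncard_insert_of_notMem hxD hD]
    push_cast
    linarith [hc x]

lemma comp {Y : Type} [Finite Y] {T : SpanoidOn Y} {g : Set Y → ℝ}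
    (hg : IsSpanPolymatroid T g) (φ : Set X → Set Y) (hφ_empty : φ ∅ = ∅)
    (hφ_union : ∀ A B, φ (A ∪ B) = φ A ∪ φ B) (hφ_inter : ∀ A B, φ (A ∩ B) = φ A ∩ φ B)
    (hφ_span : ∀ A, ∀ i ∈ sSpan S A, φ (A ∪ {i}) ⊆ sSpan T (φ A)) :
    IsSpanPolymatroid S (g ∘ φ) where
  map_empty := by simp [hφ_empty, hg.map_empty]
  submodular A B := by simpa only [Function.comp, hφ_union, hφ_inter] using hg.submodular _ _
  mono A B hAB := by
    simpa only [Function.comp, ← hφ_union, union_eq_self_of_subset_left hAB]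
      using hg.mono (φ A) (φ A ∪ φ B) subset_union_left
  union_singleton_of_mem_sSpan A i hi := by
    have hsub : φ A ⊆ φ (A ∪ {i}) := by
      rw [hφ_union]; exact subset_union_left
    simp only [Function.comp]
    rw [← union_eq_self_of_subset_left hsub,
      hg.union_eq_of_subset_sSpan _ (toFinite _) (hφ_span A i hi)]

end IsSpanPolymatroid

lemma sEntFeasible_zero {X : Type} (S : SpanoidOn X) : sEntFeasible S 0 :=
  ⟨rfl, fun _ => zero_le_one, fun _ _ => le_of_eq (by simp), fun _ _ _ => le_rfl,
    fun _ _ _ => rfl⟩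

section LPentropy

variable {X : Type} [Fintype X] {S : SpanoidOn X}

lemma bddAbove_sLPentropy_set (S : SpanoidOn X) :
    BddAbove {y : ℝ | ∃ f : Set X → ℝ, sEntFeasible S f ∧ y = f univ} := by
  refine ⟨Fintype.card X, ?_⟩
  rintro _ ⟨f, hf, rfl⟩
  obtain ⟨hpoly, hsing⟩ := sEntFeasible_iff.1 hf
  simpa [ncard_univ] using hpoly.apply_le_ncard_mul hsing finite_univ

lemma le_sLPentropy {f : Set X → ℝ} (hf : sEntFeasible S f) : f univ ≤ sLPentropy S :=
  le_csSup (bddAbove_sLPentropy_set S) ⟨f, hf, rfl⟩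

lemma sLPentropy_nonneg (S : SpanoidOn X) : 0 ≤ sLPentropy S :=
  le_sLPentropy (sEntFeasible_zero S)

lemma IsSpanPolymatroid.apply_univ_le_sLPentropy_mul {g : Set X → ℝ}
    (hg : IsSpanPolymatroid S g) {c : ℝ} (hc : 0 ≤ c) (hsing : ∀ i, g {i} ≤ c) :
    g univ ≤ sLPentropy S * c := by
  rcases hc.eq_or_lt with rfl | hc
  · simpa using hg.apply_le_ncard_mul hsing finite_univ
  have hfeas : sEntFeasible S (fun A => g A / c) := by
    refine sEntFeasible_iff.2 ⟨⟨?_, fun A B => ?_, fun A B hAB => ?_, fun A i hi => ?_⟩,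
      fun i => (div_le_one hc).2 (hsing i)⟩
    · simp [hg.map_empty]
    · rw [← add_div, ← add_div]; exact div_le_div_of_nonneg_right (hg.submodular A B) hc.le
    · exact div_le_div_of_nonneg_right (hg.mono A B hAB) hc.le
    · simp only [hg.union_singleton_of_mem_sSpan A i hi]
  exact (div_le_iff₀ hc).1 (le_sLPentropy hfeas)

end LPentropy

section Semidirect

variable {X₁ X₂ : Type} {S₁ : SpanoidOn X₁} {S₂ : SpanoidOn X₂} {f : Set (X₁ × X₂) → ℝ}

lemma IsSpanPolymatroid.comp_singleton_prod [Finite X₁] [Finite X₂]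
    (hf : IsSpanPolymatroid (semidirect S₁ S₂) f) (i : X₁) :
    IsSpanPolymatroid S₂ (fun B => f ({i} ×ˢ B)) := by
  refine hf.comp (fun B => {i} ×ˢ B) prod_empty (fun _ _ => prod_union)
    (fun _ _ => by rw [prod_inter_prod, inter_self]) ?_
  rintro B j hj ⟨i', j'⟩ ⟨rfl | -, hj'⟩
  rcases hj' with hj' | rfl
  · exact subset_sSpan _ _ ⟨rfl, hj'⟩
  · exact mem_sSpan_of_mem (p := ({i'} ×ˢ B, (i', j'))) (Or.inr ⟨B, i', j', hj, rfl⟩)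
      (subset_sSpan _ _)

lemma IsSpanPolymatroid.comp_prod_univ [Finite X₁] [Finite X₂]
    (hf : IsSpanPolymatroid (semidirect S₁ S₂) f) :
    IsSpanPolymatroid S₁ (fun A => f (A ×ˢ univ)) := by
  refine hf.comp (fun A => A ×ˢ univ) empty_prod (fun _ _ => union_prod)
    (fun _ _ => by rw [prod_inter_prod, inter_self]) ?_
  rintro A i hi ⟨i', j⟩ ⟨hi' | rfl, -⟩
  · exact subset_sSpan _ _ ⟨hi', mem_univ j⟩
  · exact mem_sSpan_of_mem (p := (A ×ˢ univ, (i', j))) (Or.inl ⟨A, i', j, hi, rfl⟩)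
      (subset_sSpan _ _)

end Semidirect

/-- `LP^entropy` is sub-multiplicative under semi-direct product. -/
theorem LPentropy_semidirect_le {X₁ X₂ : Type} [Fintype X₁] [Fintype X₂]
    (S₁ : SpanoidOn X₁) (S₂ : SpanoidOn X₂) :
    sLPentropy (semidirect S₁ S₂) ≤ sLPentropy S₁ * sLPentropy S₂ := by
  refine csSup_le ⟨0, 0, sEntFeasible_zero _, rfl⟩ ?_
  rintro _ ⟨f, hf, rfl⟩
  obtain ⟨hpoly, hsing⟩ := sEntFeasible_iff.1 hf
  have hrow : ∀ i, f ({i} ×ˢ univ) ≤ sLPentropy S₂ := fun i =>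
    le_sLPentropy (sEntFeasible_iff.2
      ⟨hpoly.comp_singleton_prod i, fun j => by simpa using hsing (i, j)⟩)
  simpa using hpoly.comp_prod_univ.apply_univ_le_sLPentropy_mul (sLPentropy_nonneg S₂) hrow
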